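/- There exists a unique F-algebra antiautomorphism 𝒯 of the Racah algebra ℜ sending A ↦ B, B ↦ C, C ↦ A. Moreover 𝒯 sends D ↦ −D, α ↦ β, β ↦ γ, γ ↦ α, δ ↦ δ, and the relations 𝒯⁶ = id and (𝒮 ∘ 𝒯)² = id hold, where 𝒮 is the unique F-algebra antiautomorphism of ℜ sending A ↦ B, B ↦ A, C ↦ C, D ↦ D. -/
import Mathlib


noncomputable section

/-- Generators of the Racah algebra. -/
inductive RGen : Type
  | A | B | C | D

namespace Racah

variable (F : Type) [Field F]

/-- The free algebra on the generators `A`, `B`, `C`, `D`. -/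
abbrev FA := FreeAlgebra F RGen

def fA : FA F := FreeAlgebra.ι F RGen.A
def fB : FA F := FreeAlgebra.ι F RGen.B
def fC : FA F := FreeAlgebra.ι F RGen.C
def fD : FA F := FreeAlgebra.ι F RGen.D

/-- α = [A,D] + AC − BA in the free algebra. -/
def fAl : FA F := (fA F * fD F - fD F * fA F) + fA F * fC F - fB F * fA F
/-- β = [B,D] + BA − CB in the free algebra. -/
def fBe : FA F := (fB F * fD F - fD F * fB F) + fB F * fA F - fC F * fB F
/-- γ = [C,D] + CB − AC in the free algebra. -/
def fGa : FA F := (fC F * fD F - fD F * fC F) + fC F * fB F - fA F * fC F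

/-- The defining relations of the Racah algebra:
`[A,B] = [B,C] = [C,A] = 2D` and each of `α`, `β`, `γ` commutes with each of `A`, `B`, `C`, `D`. -/
inductive Rel : FA F → FA F → Prop
  | AB : Rel (fA F * fB F - fB F * fA F) (2 * fD F)
  | BC : Rel (fB F * fC F - fC F * fB F) (2 * fD F)
  | CA : Rel (fC F * fA F - fA F * fC F) (2 * fD F)
  | cen (c x : FA F) (hc : c = fAl F ∨ c = fBe F ∨ c = fGa F)
      (hx : x = fA F ∨ x = fB F ∨ x = fC F ∨ x = fD F) :
      Rel (c * x) (x * c)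

/-- The Racah algebra ℜ. -/
abbrev R := RingQuot (Rel F)

def A : R F := RingQuot.mkAlgHom F (Rel F) (fA F)
def B : R F := RingQuot.mkAlgHom F (Rel F) (fB F)
def C : R F := RingQuot.mkAlgHom F (Rel F) (fC F)
def D : R F := RingQuot.mkAlgHom F (Rel F) (fD F)

/-- α = [A,D] + AC − BA. -/
def al : R F := (A F * D F - D F * A F) + A F * C F - B F * A F
/-- β = [B,D] + BA − CB. -/
def be : R F := (B F * D F - D F * B F) + B F * A F - C F * B F
/-- γ = [C,D] + CB − AC. -/
def ga : R F := (C F * D F - D F * C F) + C F * B F - A F * C F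
/-- δ = A + B + C. -/
def de : R F := A F + B F + C F

end Racah

namespace Racah

/-- An F-algebra antiautomorphism of ℜ: an F-linear bijection `f` with `f 1 = 1`
and `f (x*y) = f y * f x` for all `x`, `y`. -/
def IsAntiAut (F : Type) [Field F] (f : R F ≃ₗ[F] R F) : Prop :=
  f 1 = 1 ∧ ∀ x y : R F, f (x * y) = f y * f x

end Racah

namespace Racah

open MulOpposite

variable (F : Type) [Field F]


section auxring
variable {S : Type} [Ring S]

lemma auxT (a b c d t : S) (h : a*b - b*c = b*a - c*b)
    (ht : t = (b*d - d*b) + b*a - c*b) :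
    (-d)*b - b*(-d) + a*b - b*c = t := by
  have e1 : (-d)*b - b*(-d) + a*b - b*c = (b*d - d*b) + (a*b - b*c) := by noncomm_ring
  rw [ht, e1, h]; noncomm_ring

lemma auxG (a b c d t : S) (h : c*a - a*b = a*c - b*a)
    (ht : t = -((a*d - d*a) + a*c - b*a)) :
    a*(-d) - (-d)*a + a*b - c*a = t := by
  have e1 : a*(-d) - (-d)*a + a*b - c*a = -((a*d - d*a) + (c*a - a*b)) := by noncomm_ring
  rw [ht, e1, h]; noncomm_ring

lemma auxRop (b c d : S) (h : b*c - c*b = 2*d) : c*b - b*c = -d*2 := by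
  have e1 : c*b - b*c = -(b*c - c*b) := by noncomm_ring
  rw [e1, h]; noncomm_ring

lemma auxRg (a c d : S) (h : c*a - a*c = 2*d) : a*c - c*a = 2*(-d) := by
  have e1 : a*c - c*a = -(c*a - a*c) := by noncomm_ring
  rw [e1, h]; noncomm_ring

lemma auxNeg2 (b c d : S) (h : b*c - c*b = 2*d) : c*b - b*c = -(2*d) := by
  have e1 : c*b - b*c = -(b*c - c*b) := by noncomm_ring
  rw [e1, h]

lemma auxC1 (c x : S) (h : c * x = x * c) : c * -x = -x * c := by
  rw [mul_neg, h, neg_mul]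

lemma auxC2 (c x : S) (h : c * x = x * c) : -c * x = x * -c := by
  rw [neg_mul, h, mul_neg]

lemma auxC3 (c x : S) (h : c * x = x * c) : -c * -x = -x * -c := by
  rw [neg_mul, mul_neg, neg_mul, mul_neg, h]

end auxring

lemma rAB : A F * B F - B F * A F = 2 * D F := by
  have h := RingQuot.mkAlgHom_rel F (Rel.AB (F := F))
  simpa [A, B, D, map_sub, map_mul, map_ofNat] using h

lemma rBC : B F * C F - C F * B F = 2 * D F := by
  have h := RingQuot.mkAlgHom_rel F (Rel.BC (F := F))
  simpa [B, C, D, map_sub, map_mul, map_ofNat] using h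

lemma rCA : C F * A F - A F * C F = 2 * D F := by
  have h := RingQuot.mkAlgHom_rel F (Rel.CA (F := F))
  simpa [A, C, D, map_sub, map_mul, map_ofNat] using h

lemma mk_al : RingQuot.mkAlgHom F (Rel F) (fAl F) = al F := by
  simp [fAl, al, A, B, C, D, map_sub, map_add, map_mul]

lemma mk_be : RingQuot.mkAlgHom F (Rel F) (fBe F) = be F := by
  simp [fBe, be, A, B, C, D, map_sub, map_add, map_mul]

lemma mk_ga : RingQuot.mkAlgHom F (Rel F) (fGa F) = ga F := by
  simp [fGa, ga, A, B, C, D, map_sub, map_add, map_mul]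

lemma cen_comm (c x : R F) (hc : c = al F ∨ c = be F ∨ c = ga F)
    (hx : x = A F ∨ x = B F ∨ x = C F ∨ x = D F) : c * x = x * c := by
  obtain ⟨c', hc', rfl⟩ : ∃ c', (c' = fAl F ∨ c' = fBe F ∨ c' = fGa F) ∧
      c = RingQuot.mkAlgHom F (Rel F) c' := by
    rcases hc with rfl | rfl | rfl
    exacts [⟨_, Or.inl rfl, (mk_al F).symm⟩, ⟨_, Or.inr (Or.inl rfl), (mk_be F).symm⟩,
      ⟨_, Or.inr (Or.inr rfl), (mk_ga F).symm⟩]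
  obtain ⟨x', hx', rfl⟩ : ∃ x', (x' = fA F ∨ x' = fB F ∨ x' = fC F ∨ x' = fD F) ∧
      x = RingQuot.mkAlgHom F (Rel F) x' := by
    rcases hx with rfl | rfl | rfl | rfl
    exacts [⟨_, Or.inl rfl, rfl⟩, ⟨_, Or.inr (Or.inl rfl), rfl⟩,
      ⟨_, Or.inr (Or.inr (Or.inl rfl)), rfl⟩, ⟨_, Or.inr (Or.inr (Or.inr rfl)), rfl⟩]
  have h := RingQuot.mkAlgHom_rel F (Rel.cen c' x' hc' hx')
  simpa [map_mul] using h

lemma cen_comm' (c x : R F)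
    (hc : c = al F ∨ c = be F ∨ c = ga F ∨ c = -al F ∨ c = -be F ∨ c = -ga F)
    (hx : x = A F ∨ x = B F ∨ x = C F ∨ x = D F ∨ x = -D F) : c * x = x * c := by
  obtain ⟨c₀, hc₀, hcc⟩ : ∃ c₀, (c₀ = al F ∨ c₀ = be F ∨ c₀ = ga F) ∧ (c = c₀ ∨ c = -c₀) := by
    rcases hc with rfl | rfl | rfl | rfl | rfl | rfl
    exacts [⟨al F, Or.inl rfl, Or.inl rfl⟩, ⟨be F, Or.inr (Or.inl rfl), Or.inl rfl⟩,
      ⟨ga F, Or.inr (Or.inr rfl), Or.inl rfl⟩, ⟨al F, Or.inl rfl, Or.inr rfl⟩,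
      ⟨be F, Or.inr (Or.inl rfl), Or.inr rfl⟩, ⟨ga F, Or.inr (Or.inr rfl), Or.inr rfl⟩]
  obtain ⟨x₀, hx₀, hxx⟩ : ∃ x₀, (x₀ = A F ∨ x₀ = B F ∨ x₀ = C F ∨ x₀ = D F) ∧
      (x = x₀ ∨ x = -x₀) := by
    rcases hx with rfl | rfl | rfl | rfl | rfl
    exacts [⟨A F, Or.inl rfl, Or.inl rfl⟩, ⟨B F, Or.inr (Or.inl rfl), Or.inl rfl⟩,
      ⟨C F, Or.inr (Or.inr (Or.inl rfl)), Or.inl rfl⟩,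
      ⟨D F, Or.inr (Or.inr (Or.inr rfl)), Or.inl rfl⟩,
      ⟨D F, Or.inr (Or.inr (Or.inr rfl)), Or.inr rfl⟩]
  have base := cen_comm F c₀ x₀ hc₀ hx₀
  rcases hcc with rfl | rfl <;> rcases hxx with rfl | rfl
  · exact base
  · exact auxC1 _ _ base
  · exact auxC2 _ _ base
  · exact auxC3 _ _ base

lemma kAB : A F * B F - B F * C F = B F * A F - C F * B F := by
  have h1 := rAB F; have h2 := rBC F
  have e : A F * B F - B F * C F
      = (A F * B F - B F * A F) - (B F * C F - C F * B F) + (B F * A F - C F * B F) := by abel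
  rw [e, h1, h2]; abel

lemma kBC : B F * C F - C F * A F = C F * B F - A F * C F := by
  have h1 := rBC F; have h2 := rCA F
  have e : B F * C F - C F * A F
      = (B F * C F - C F * B F) - (C F * A F - A F * C F) + (C F * B F - A F * C F) := by abel
  rw [e, h1, h2]; abel

lemma kCA : C F * A F - A F * B F = A F * C F - B F * A F := by
  have h1 := rCA F; have h2 := rAB F
  have e : C F * A F - A F * B F
      = (C F * A F - A F * C F) - (A F * B F - B F * A F) + (A F * C F - B F * A F) := by abel
  rw [e, h1, h2]; abel

/-! Generator images for the four homomorphisms. -/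

def Tg : RGen → (R F)ᵐᵒᵖ
  | .A => op (B F) | .B => op (C F) | .C => op (A F) | .D => op (-D F)

def Ug : RGen → (R F)ᵐᵒᵖ
  | .A => op (C F) | .B => op (A F) | .C => op (B F) | .D => op (-D F)

def Eg : RGen → R F
  | .A => C F | .B => A F | .C => B F | .D => D F

def Gg : RGen → R F
  | .A => A F | .B => C F | .C => B F | .D => -D F

def Tfa : FA F →ₐ[F] (R F)ᵐᵒᵖ := FreeAlgebra.lift F (Tg F)
def Ufa : FA F →ₐ[F] (R F)ᵐᵒᵖ := FreeAlgebra.lift F (Ug F)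
def Efa : FA F →ₐ[F] R F := FreeAlgebra.lift F (Eg F)
def Gfa : FA F →ₐ[F] R F := FreeAlgebra.lift F (Gg F)

@[simp] lemma Tfa_fA : Tfa F (fA F) = op (B F) := by simp [Tfa, fA, Tg]
@[simp] lemma Tfa_fB : Tfa F (fB F) = op (C F) := by simp [Tfa, fB, Tg]
@[simp] lemma Tfa_fC : Tfa F (fC F) = op (A F) := by simp [Tfa, fC, Tg]
@[simp] lemma Tfa_fD : Tfa F (fD F) = op (-D F) := by simp [Tfa, fD, Tg]

@[simp] lemma Ufa_fA : Ufa F (fA F) = op (C F) := by simp [Ufa, fA, Ug]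
@[simp] lemma Ufa_fB : Ufa F (fB F) = op (A F) := by simp [Ufa, fB, Ug]
@[simp] lemma Ufa_fC : Ufa F (fC F) = op (B F) := by simp [Ufa, fC, Ug]
@[simp] lemma Ufa_fD : Ufa F (fD F) = op (-D F) := by simp [Ufa, fD, Ug]

@[simp] lemma Efa_fA : Efa F (fA F) = C F := by simp [Efa, fA, Eg]
@[simp] lemma Efa_fB : Efa F (fB F) = A F := by simp [Efa, fB, Eg]
@[simp] lemma Efa_fC : Efa F (fC F) = B F := by simp [Efa, fC, Eg]
@[simp] lemma Efa_fD : Efa F (fD F) = D F := by simp [Efa, fD, Eg]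

@[simp] lemma Gfa_fA : Gfa F (fA F) = A F := by simp [Gfa, fA, Gg]
@[simp] lemma Gfa_fB : Gfa F (fB F) = C F := by simp [Gfa, fB, Gg]
@[simp] lemma Gfa_fC : Gfa F (fC F) = B F := by simp [Gfa, fC, Gg]
@[simp] lemma Gfa_fD : Gfa F (fD F) = -D F := by simp [Gfa, fD, Gg]

lemma Tfa_fAl : Tfa F (fAl F) = op (be F) := by
  apply unop_injective
  simp only [fAl, map_sub, map_add, map_mul, Tfa_fA, Tfa_fB, Tfa_fC, Tfa_fD,
    unop_sub, unop_add, unop_mul, unop_op, unop_neg]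
  exact auxT (A F) (B F) (C F) (D F) (be F) (kAB F) rfl

lemma Tfa_fBe : Tfa F (fBe F) = op (ga F) := by
  apply unop_injective
  simp only [fBe, map_sub, map_add, map_mul, Tfa_fA, Tfa_fB, Tfa_fC, Tfa_fD,
    unop_sub, unop_add, unop_mul, unop_op, unop_neg]
  exact auxT (B F) (C F) (A F) (D F) (ga F) (kBC F) rfl

lemma Tfa_fGa : Tfa F (fGa F) = op (al F) := by
  apply unop_injective
  simp only [fGa, map_sub, map_add, map_mul, Tfa_fA, Tfa_fB, Tfa_fC, Tfa_fD,
    unop_sub, unop_add, unop_mul, unop_op, unop_neg]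
  exact auxT (C F) (A F) (B F) (D F) (al F) (kCA F) rfl

lemma Ufa_fAl : Ufa F (fAl F) = op (ga F) := by
  apply unop_injective
  simp only [fAl, map_sub, map_add, map_mul, Ufa_fA, Ufa_fB, Ufa_fC, Ufa_fD,
    unop_sub, unop_add, unop_mul, unop_op, unop_neg]
  exact auxT (B F) (C F) (A F) (D F) (ga F) (kBC F) rfl

lemma Ufa_fBe : Ufa F (fBe F) = op (al F) := by
  apply unop_injective
  simp only [fBe, map_sub, map_add, map_mul, Ufa_fA, Ufa_fB, Ufa_fC, Ufa_fD,
    unop_sub, unop_add, unop_mul, unop_op, unop_neg]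
  exact auxT (C F) (A F) (B F) (D F) (al F) (kCA F) rfl

lemma Ufa_fGa : Ufa F (fGa F) = op (be F) := by
  apply unop_injective
  simp only [fGa, map_sub, map_add, map_mul, Ufa_fA, Ufa_fB, Ufa_fC, Ufa_fD,
    unop_sub, unop_add, unop_mul, unop_op, unop_neg]
  exact auxT (A F) (B F) (C F) (D F) (be F) (kAB F) rfl

lemma Efa_fAl : Efa F (fAl F) = ga F := by
  simp only [fAl, map_sub, map_add, map_mul, Efa_fA, Efa_fB, Efa_fC, Efa_fD, ga]

lemma Efa_fBe : Efa F (fBe F) = al F := by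
  simp only [fBe, map_sub, map_add, map_mul, Efa_fA, Efa_fB, Efa_fC, Efa_fD, al]

lemma Efa_fGa : Efa F (fGa F) = be F := by
  simp only [fGa, map_sub, map_add, map_mul, Efa_fA, Efa_fB, Efa_fC, Efa_fD, be]

lemma Gfa_fAl : Gfa F (fAl F) = -al F := by
  simp only [fAl, map_sub, map_add, map_mul, Gfa_fA, Gfa_fB, Gfa_fC, Gfa_fD]
  exact auxG (A F) (B F) (C F) (D F) (-al F) (kCA F) (by rw [al])

lemma Gfa_fBe : Gfa F (fBe F) = -ga F := by
  simp only [fBe, map_sub, map_add, map_mul, Gfa_fA, Gfa_fB, Gfa_fC, Gfa_fD]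
  exact auxG (C F) (A F) (B F) (D F) (-ga F) (kBC F) (by rw [ga])

lemma Gfa_fGa : Gfa F (fGa F) = -be F := by
  simp only [fGa, map_sub, map_add, map_mul, Gfa_fA, Gfa_fB, Gfa_fC, Gfa_fD]
  exact auxG (B F) (C F) (A F) (D F) (-be F) (kAB F) (by rw [be])

lemma Tfa_rel : ∀ ⦃x y : FA F⦄, Rel F x y → Tfa F x = Tfa F y := by
  intro x y h
  cases h with
  | AB =>
    apply unop_injective
    simp only [map_sub, map_mul, map_ofNat, Tfa_fA, Tfa_fB, Tfa_fD,
      unop_sub, unop_mul, unop_op, unop_ofNat, unop_neg]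
    exact auxRop (B F) (C F) (D F) (rBC F)
  | BC =>
    apply unop_injective
    simp only [map_sub, map_mul, map_ofNat, Tfa_fB, Tfa_fC, Tfa_fD,
      unop_sub, unop_mul, unop_op, unop_ofNat, unop_neg]
    exact auxRop (C F) (A F) (D F) (rCA F)
  | CA =>
    apply unop_injective
    simp only [map_sub, map_mul, map_ofNat, Tfa_fC, Tfa_fA, Tfa_fD,
      unop_sub, unop_mul, unop_op, unop_ofNat, unop_neg]
    exact auxRop (A F) (B F) (D F) (rAB F)
  | cen c x hc hx =>
    rw [map_mul, map_mul]
    apply unop_injective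
    rcases hc with rfl | rfl | rfl <;> rcases hx with rfl | rfl | rfl | rfl <;>
      simp only [Tfa_fAl, Tfa_fBe, Tfa_fGa, Tfa_fA, Tfa_fB, Tfa_fC, Tfa_fD,
        unop_mul, unop_op] <;>
      exact (cen_comm' F _ _ (by tauto) (by tauto)).symm

lemma Ufa_rel : ∀ ⦃x y : FA F⦄, Rel F x y → Ufa F x = Ufa F y := by
  intro x y h
  cases h with
  | AB =>
    apply unop_injective
    simp only [map_sub, map_mul, map_ofNat, Ufa_fA, Ufa_fB, Ufa_fD,
      unop_sub, unop_mul, unop_op, unop_ofNat, unop_neg]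
    exact auxRop (C F) (A F) (D F) (rCA F)
  | BC =>
    apply unop_injective
    simp only [map_sub, map_mul, map_ofNat, Ufa_fB, Ufa_fC, Ufa_fD,
      unop_sub, unop_mul, unop_op, unop_ofNat, unop_neg]
    exact auxRop (A F) (B F) (D F) (rAB F)
  | CA =>
    apply unop_injective
    simp only [map_sub, map_mul, map_ofNat, Ufa_fC, Ufa_fA, Ufa_fD,
      unop_sub, unop_mul, unop_op, unop_ofNat, unop_neg]
    exact auxRop (B F) (C F) (D F) (rBC F)
  | cen c x hc hx =>
    rw [map_mul, map_mul]
    apply unop_injective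
    rcases hc with rfl | rfl | rfl <;> rcases hx with rfl | rfl | rfl | rfl <;>
      simp only [Ufa_fAl, Ufa_fBe, Ufa_fGa, Ufa_fA, Ufa_fB, Ufa_fC, Ufa_fD,
        unop_mul, unop_op] <;>
      exact (cen_comm' F _ _ (by tauto) (by tauto)).symm

lemma Efa_rel : ∀ ⦃x y : FA F⦄, Rel F x y → Efa F x = Efa F y := by
  intro x y h
  cases h with
  | AB =>
    simp only [map_sub, map_mul, map_ofNat, Efa_fA, Efa_fB, Efa_fD]
    exact rCA F
  | BC =>
    simp only [map_sub, map_mul, map_ofNat, Efa_fB, Efa_fC, Efa_fD]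
    exact rAB F
  | CA =>
    simp only [map_sub, map_mul, map_ofNat, Efa_fC, Efa_fA, Efa_fD]
    exact rBC F
  | cen c x hc hx =>
    rw [map_mul, map_mul]
    rcases hc with rfl | rfl | rfl <;> rcases hx with rfl | rfl | rfl | rfl <;>
      simp only [Efa_fAl, Efa_fBe, Efa_fGa, Efa_fA, Efa_fB, Efa_fC, Efa_fD] <;>
      exact cen_comm' F _ _ (by tauto) (by tauto)

lemma Gfa_rel : ∀ ⦃x y : FA F⦄, Rel F x y → Gfa F x = Gfa F y := by
  intro x y h
  cases h with
  | AB =>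
    simp only [map_sub, map_mul, map_ofNat, Gfa_fA, Gfa_fB, Gfa_fD]
    exact auxRg (A F) (C F) (D F) (rCA F)
  | BC =>
    simp only [map_sub, map_mul, map_ofNat, Gfa_fB, Gfa_fC, Gfa_fD]
    exact auxRg (C F) (B F) (D F) (rBC F)
  | CA =>
    simp only [map_sub, map_mul, map_ofNat, Gfa_fC, Gfa_fA, Gfa_fD]
    exact auxRg (B F) (A F) (D F) (rAB F)
  | cen c x hc hx =>
    rw [map_mul, map_mul]
    rcases hc with rfl | rfl | rfl <;> rcases hx with rfl | rfl | rfl | rfl <;>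
      simp only [Gfa_fAl, Gfa_fBe, Gfa_fGa, Gfa_fA, Gfa_fB, Gfa_fC, Gfa_fD] <;>
      exact cen_comm' F _ _ (by tauto) (by tauto)

/-! The induced maps on the Racah algebra. -/

def Tq : R F →ₐ[F] (R F)ᵐᵒᵖ := RingQuot.liftAlgHom F ⟨Tfa F, Tfa_rel F⟩
def Uq : R F →ₐ[F] (R F)ᵐᵒᵖ := RingQuot.liftAlgHom F ⟨Ufa F, Ufa_rel F⟩
def Eq' : R F →ₐ[F] R F := RingQuot.liftAlgHom F ⟨Efa F, Efa_rel F⟩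
def Gq : R F →ₐ[F] R F := RingQuot.liftAlgHom F ⟨Gfa F, Gfa_rel F⟩

@[simp] lemma Tq_A : Tq F (A F) = op (B F) := by
  rw [A, Tq, RingQuot.liftAlgHom_mkAlgHom_apply]; exact Tfa_fA F
@[simp] lemma Tq_B : Tq F (B F) = op (C F) := by
  rw [B, Tq, RingQuot.liftAlgHom_mkAlgHom_apply]; exact Tfa_fB F
@[simp] lemma Tq_C : Tq F (C F) = op (A F) := by
  rw [C, Tq, RingQuot.liftAlgHom_mkAlgHom_apply]; exact Tfa_fC F
@[simp] lemma Tq_D : Tq F (D F) = op (-D F) := by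
  rw [D, Tq, RingQuot.liftAlgHom_mkAlgHom_apply]; exact Tfa_fD F

@[simp] lemma Uq_A : Uq F (A F) = op (C F) := by
  rw [A, Uq, RingQuot.liftAlgHom_mkAlgHom_apply]; exact Ufa_fA F
@[simp] lemma Uq_B : Uq F (B F) = op (A F) := by
  rw [B, Uq, RingQuot.liftAlgHom_mkAlgHom_apply]; exact Ufa_fB F
@[simp] lemma Uq_C : Uq F (C F) = op (B F) := by
  rw [C, Uq, RingQuot.liftAlgHom_mkAlgHom_apply]; exact Ufa_fC F
@[simp] lemma Uq_D : Uq F (D F) = op (-D F) := by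
  rw [D, Uq, RingQuot.liftAlgHom_mkAlgHom_apply]; exact Ufa_fD F

@[simp] lemma Eq'_A : Eq' F (A F) = C F := by
  rw [A, Eq', RingQuot.liftAlgHom_mkAlgHom_apply]; exact Efa_fA F
@[simp] lemma Eq'_B : Eq' F (B F) = A F := by
  rw [B, Eq', RingQuot.liftAlgHom_mkAlgHom_apply]; exact Efa_fB F
@[simp] lemma Eq'_C : Eq' F (C F) = B F := by
  rw [C, Eq', RingQuot.liftAlgHom_mkAlgHom_apply]; exact Efa_fC F
@[simp] lemma Eq'_D : Eq' F (D F) = D F := by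
  rw [D, Eq', RingQuot.liftAlgHom_mkAlgHom_apply]; exact Efa_fD F

@[simp] lemma Gq_A : Gq F (A F) = A F := by
  rw [A, Gq, RingQuot.liftAlgHom_mkAlgHom_apply]; exact Gfa_fA F
@[simp] lemma Gq_B : Gq F (B F) = C F := by
  rw [B, Gq, RingQuot.liftAlgHom_mkAlgHom_apply]; exact Gfa_fB F
@[simp] lemma Gq_C : Gq F (C F) = B F := by
  rw [C, Gq, RingQuot.liftAlgHom_mkAlgHom_apply]; exact Gfa_fC F
@[simp] lemma Gq_D : Gq F (D F) = -D F := by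
  rw [D, Gq, RingQuot.liftAlgHom_mkAlgHom_apply]; exact Gfa_fD F

/-- Two multiplicative, additive, scalar-fixing maps agreeing on generators agree. -/
lemma ext_hom (f g : R F → R F)
    (hfa : ∀ x y, f (x + y) = f x + f y) (hga : ∀ x y, g (x + y) = g x + g y)
    (hfm : ∀ x y, f (x * y) = f x * f y) (hgm : ∀ x y, g (x * y) = g x * g y)
    (hfs : ∀ r : F, f (algebraMap F (R F) r) = algebraMap F (R F) r)
    (hgs : ∀ r : F, g (algebraMap F (R F) r) = algebraMap F (R F) r)
    (hA : f (A F) = g (A F)) (hB : f (B F) = g (B F))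
    (hC : f (C F) = g (C F)) (hD : f (D F) = g (D F)) :
    ∀ x, f x = g x := by
  intro x
  obtain ⟨a, rfl⟩ := RingQuot.mkAlgHom_surjective F (Rel F) x
  induction a using FreeAlgebra.induction with
  | grade0 r => rw [AlgHom.commutes, hfs, hgs]
  | grade1 i => cases i; exacts [hA, hB, hC, hD]
  | mul x y ihx ihy => rw [map_mul, hfm, hgm, ihx, ihy]
  | add x y ihx ihy => rw [map_add, hfa, hga, ihx, ihy]

/-- Anti-multiplicative version. -/
lemma ext_antihom (f g : R F → R F)
    (hfa : ∀ x y, f (x + y) = f x + f y) (hga : ∀ x y, g (x + y) = g x + g y)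
    (hfm : ∀ x y, f (x * y) = f y * f x) (hgm : ∀ x y, g (x * y) = g y * g x)
    (hfs : ∀ r : F, f (algebraMap F (R F) r) = algebraMap F (R F) r)
    (hgs : ∀ r : F, g (algebraMap F (R F) r) = algebraMap F (R F) r)
    (hA : f (A F) = g (A F)) (hB : f (B F) = g (B F))
    (hC : f (C F) = g (C F)) (hD : f (D F) = g (D F)) :
    ∀ x, f x = g x := by
  intro x
  obtain ⟨a, rfl⟩ := RingQuot.mkAlgHom_surjective F (Rel F) x
  induction a using FreeAlgebra.induction with
  | grade0 r => rw [AlgHom.commutes, hfs, hgs]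
  | grade1 i => cases i; exacts [hA, hB, hC, hD]
  | mul x y ihx ihy => rw [map_mul, hfm, hgm, ihx, ihy]
  | add x y ihx ihy => rw [map_add, hfa, hga, ihx, ihy]

def Tfun : R F → R F := fun x => unop (Tq F x)
def Ufun : R F → R F := fun x => unop (Uq F x)

lemma Tfun_add (x y : R F) : Tfun F (x + y) = Tfun F x + Tfun F y := by
  simp [Tfun, map_add]
lemma Ufun_add (x y : R F) : Ufun F (x + y) = Ufun F x + Ufun F y := by
  simp [Ufun, map_add]
lemma Tfun_mul (x y : R F) : Tfun F (x * y) = Tfun F y * Tfun F x := by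
  simp [Tfun, map_mul]
lemma Ufun_mul (x y : R F) : Ufun F (x * y) = Ufun F y * Ufun F x := by
  simp [Ufun, map_mul]
lemma Tfun_alg (r : F) : Tfun F (algebraMap F (R F) r) = algebraMap F (R F) r := by
  simp [Tfun, AlgHom.commutes, MulOpposite.algebraMap_apply]
lemma Ufun_alg (r : F) : Ufun F (algebraMap F (R F) r) = algebraMap F (R F) r := by
  simp [Ufun, AlgHom.commutes, MulOpposite.algebraMap_apply]

lemma TU (x : R F) : Tfun F (Ufun F x) = x := by
  refine ext_hom F (fun y => Tfun F (Ufun F y)) id ?_ ?_ ?_ ?_ ?_ ?_ ?_ ?_ ?_ ?_ x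
  · intro x y; show Tfun F (Ufun F (x + y)) = Tfun F (Ufun F x) + Tfun F (Ufun F y)
    rw [Ufun_add, Tfun_add]
  · intro x y; rfl
  · intro x y; show Tfun F (Ufun F (x * y)) = Tfun F (Ufun F x) * Tfun F (Ufun F y)
    rw [Ufun_mul, Tfun_mul]
  · intro x y; rfl
  · intro r; show Tfun F (Ufun F (algebraMap F (R F) r)) = algebraMap F (R F) r
    rw [Ufun_alg, Tfun_alg]
  · intro r; rfl
  · show Tfun F (unop (Uq F (A F))) = A F
    simp [Tfun, Uq_A]
  · show Tfun F (unop (Uq F (B F))) = B F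
    simp [Tfun, Uq_B]
  · show Tfun F (unop (Uq F (C F))) = C F
    simp [Tfun, Uq_C]
  · show Tfun F (unop (Uq F (D F))) = D F
    simp [Tfun, Uq_D]

lemma UT (x : R F) : Ufun F (Tfun F x) = x := by
  refine ext_hom F (fun y => Ufun F (Tfun F y)) id ?_ ?_ ?_ ?_ ?_ ?_ ?_ ?_ ?_ ?_ x
  · intro x y; show Ufun F (Tfun F (x + y)) = Ufun F (Tfun F x) + Ufun F (Tfun F y)
    rw [Tfun_add, Ufun_add]
  · intro x y; rfl
  · intro x y; show Ufun F (Tfun F (x * y)) = Ufun F (Tfun F x) * Ufun F (Tfun F y)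
    rw [Tfun_mul, Ufun_mul]
  · intro x y; rfl
  · intro r; show Ufun F (Tfun F (algebraMap F (R F) r)) = algebraMap F (R F) r
    rw [Tfun_alg, Ufun_alg]
  · intro r; rfl
  · show Ufun F (unop (Tq F (A F))) = A F
    simp [Ufun, Tq_A]
  · show Ufun F (unop (Tq F (B F))) = B F
    simp [Ufun, Tq_B]
  · show Ufun F (unop (Tq F (C F))) = C F
    simp [Ufun, Tq_C]
  · show Ufun F (unop (Tq F (D F))) = D F
    simp [Ufun, Tq_D]

def T0 : R F ≃ₗ[F] R F :=
  LinearEquiv.ofLinear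
    ((opLinearEquiv F : R F ≃ₗ[F] (R F)ᵐᵒᵖ).symm.toLinearMap.comp (Tq F).toLinearMap)
    ((opLinearEquiv F : R F ≃ₗ[F] (R F)ᵐᵒᵖ).symm.toLinearMap.comp (Uq F).toLinearMap)
    (LinearMap.ext fun x => TU F x)
    (LinearMap.ext fun x => UT F x)

lemma T0_apply (x : R F) : T0 F x = unop (Tq F x) := rfl

lemma T0_antiAut : IsAntiAut F (T0 F) := by
  constructor
  · rw [T0_apply, map_one]; rfl
  · intro x y; rw [T0_apply, T0_apply, T0_apply, map_mul]; rfl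


lemma auxHalf {F S : Type} [Field F] [Ring S] [Algebra F S] (h2 : (2:F) ≠ 0)
    (x y : S) (h : x + x = -(y + y)) : x = -y := by
  have hu : algebraMap F S 2⁻¹ * 2 = 1 := by
    rw [← map_ofNat (algebraMap F S) 2, ← map_mul, inv_mul_cancel₀ h2, map_one]
  have h' : (2:S) * x = 2 * (-y) := by
    rw [two_mul, mul_neg, two_mul]; exact h
  calc x = 1 * x := (one_mul x).symm
    _ = (algebraMap F S 2⁻¹ * 2) * x := by rw [hu]
    _ = algebraMap F S 2⁻¹ * (2 * x) := by rw [mul_assoc]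
    _ = algebraMap F S 2⁻¹ * (2 * (-y)) := by rw [h']
    _ = (algebraMap F S 2⁻¹ * 2) * (-y) := by rw [mul_assoc]
    _ = -y := by rw [hu, one_mul]

section more
variable (F : Type) [Field F]
open MulOpposite

@[simp] lemma Tfun_A : Tfun F (A F) = B F := by
  show unop (Tq F (A F)) = B F; rw [Tq_A]; rfl
@[simp] lemma Tfun_B : Tfun F (B F) = C F := by
  show unop (Tq F (B F)) = C F; rw [Tq_B]; rfl
@[simp] lemma Tfun_C : Tfun F (C F) = A F := by
  show unop (Tq F (C F)) = A F; rw [Tq_C]; rfl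
@[simp] lemma Tfun_D : Tfun F (D F) = -D F := by
  show unop (Tq F (D F)) = -D F; rw [Tq_D]; rfl

lemma Tfun_neg (x : R F) : Tfun F (-x) = -Tfun F x := by
  have e := map_neg (Tq F) x
  show unop (Tq F (-x)) = -unop (Tq F x)
  rw [e]
  exact MulOpposite.unop_neg _

lemma Tfun_al : Tfun F (al F) = be F := by
  show unop (Tq F (al F)) = be F
  rw [← mk_al, Tq, RingQuot.liftAlgHom_mkAlgHom_apply, Tfa_fAl, unop_op]

lemma Tfun_be : Tfun F (be F) = ga F := by
  show unop (Tq F (be F)) = ga F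
  rw [← mk_be, Tq, RingQuot.liftAlgHom_mkAlgHom_apply, Tfa_fBe, unop_op]

lemma Tfun_ga : Tfun F (ga F) = al F := by
  show unop (Tq F (ga F)) = al F
  rw [← mk_ga, Tq, RingQuot.liftAlgHom_mkAlgHom_apply, Tfa_fGa, unop_op]

lemma Tfun_de : Tfun F (de F) = de F := by
  show unop (Tq F (de F)) = de F
  rw [de, map_add, map_add, Tq_A, Tq_B, Tq_C]
  show B F + C F + A F = A F + B F + C F
  abel

/-- any antiautomorphism fixes scalars -/
lemma antiaut_alg (T : R F ≃ₗ[F] R F) (hT : IsAntiAut F T) (r : F) :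
    T (algebraMap F (R F) r) = algebraMap F (R F) r := by
  calc T (algebraMap F (R F) r) = T (r • (1 : R F)) :=
        congrArg T (Algebra.algebraMap_eq_smul_one r)
    _ = r • T 1 := map_smul T r 1
    _ = r • (1 : R F) := by rw [hT.1]
    _ = algebraMap F (R F) r := (Algebra.algebraMap_eq_smul_one r).symm

lemma antiaut_D (h2 : (2:F) ≠ 0) (T : R F ≃ₗ[F] R F) (hT : IsAntiAut F T)
    (hA : T (A F) = B F) (hB : T (B F) = C F) : T (D F) = -D F := by
  have h1 : T (A F * B F - B F * A F) = C F * B F - B F * C F := by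
    have e := map_sub T (A F * B F) (B F * A F)
    rw [hT.2, hT.2, hA, hB] at e
    exact e
  rw [rAB] at h1
  have h4 : C F * B F - B F * C F = -(2 * D F) := auxNeg2 (B F) (C F) (D F) (rBC F)
  have e2 : (2 : R F) * D F = D F + D F := two_mul (D F)
  have key : T (D F) + T (D F) = -(D F + D F) :=
    calc T (D F) + T (D F) = T (D F + D F) := (map_add T _ _).symm
      _ = T (2 * D F) := congrArg T e2.symm
      _ = -(2 * D F) := h1.trans h4
      _ = -(D F + D F) := congrArg Neg.neg e2
  exact auxHalf h2 (T (D F)) (D F) key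

lemma antiaut_eq_Tfun (h2 : (2:F) ≠ 0) (T : R F ≃ₗ[F] R F) (hT : IsAntiAut F T)
    (hA : T (A F) = B F) (hB : T (B F) = C F) (hC : T (C F) = A F) :
    ∀ x, T x = Tfun F x := by
  have hD := antiaut_D F h2 T hT hA hB
  refine ext_antihom F (⇑T) (Tfun F) (fun x y => map_add T x y) (Tfun_add F)
    hT.2 (Tfun_mul F) (antiaut_alg F T hT) (Tfun_alg F) ?_ ?_ ?_ ?_
  · rw [hA, Tfun_A]
  · rw [hB, Tfun_B]
  · rw [hC, Tfun_C]
  · rw [hD, Tfun_D]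

lemma TfunTfun (x : R F) : Tfun F (Tfun F x) = Eq' F x := by
  refine ext_hom F (fun y => Tfun F (Tfun F y)) (Eq' F) ?_ ?_ ?_ ?_ ?_ ?_ ?_ ?_ ?_ ?_ x
  · intro x y
    show Tfun F (Tfun F (x + y)) = Tfun F (Tfun F x) + Tfun F (Tfun F y)
    rw [Tfun_add, Tfun_add]
  · exact fun x y => map_add (Eq' F) x y
  · intro x y
    show Tfun F (Tfun F (x * y)) = Tfun F (Tfun F x) * Tfun F (Tfun F y)
    rw [Tfun_mul, Tfun_mul]
  · exact fun x y => map_mul (Eq' F) x y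
  · intro r
    show Tfun F (Tfun F (algebraMap F (R F) r)) = algebraMap F (R F) r
    rw [Tfun_alg, Tfun_alg]
  · exact fun r => (Eq' F).commutes r
  · show Tfun F (Tfun F (A F)) = Eq' F (A F)
    rw [Tfun_A, Tfun_B, Eq'_A]
  · show Tfun F (Tfun F (B F)) = Eq' F (B F)
    rw [Tfun_B, Tfun_C, Eq'_B]
  · show Tfun F (Tfun F (C F)) = Eq' F (C F)
    rw [Tfun_C, Tfun_A, Eq'_C]
  · show Tfun F (Tfun F (D F)) = Eq' F (D F)
    rw [Tfun_D, Tfun_neg, Tfun_D, Eq'_D]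
    exact neg_neg (D F)

lemma Eq'_cube (x : R F) : Eq' F (Eq' F (Eq' F x)) = x := by
  refine ext_hom F (fun y => Eq' F (Eq' F (Eq' F y))) id ?_ ?_ ?_ ?_ ?_ ?_ ?_ ?_ ?_ ?_ x
  · intro x y
    show Eq' F (Eq' F (Eq' F (x + y))) = _
    rw [map_add, map_add, map_add]; try rfl
  · intro x y; rfl
  · intro x y
    show Eq' F (Eq' F (Eq' F (x * y))) = _
    rw [map_mul, map_mul, map_mul]; try rfl
  · intro x y; rfl
  · intro r
    show Eq' F (Eq' F (Eq' F (algebraMap F (R F) r))) = algebraMap F (R F) r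
    rw [AlgHom.commutes, AlgHom.commutes, AlgHom.commutes]
  · intro r; rfl
  · show Eq' F (Eq' F (Eq' F (A F))) = id (A F)
    rw [Eq'_A, Eq'_C, Eq'_B]; try rfl
  · show Eq' F (Eq' F (Eq' F (B F))) = id (B F)
    rw [Eq'_B, Eq'_A, Eq'_C]; try rfl
  · show Eq' F (Eq' F (Eq' F (C F))) = id (C F)
    rw [Eq'_C, Eq'_B, Eq'_A]; try rfl
  · show Eq' F (Eq' F (Eq' F (D F))) = id (D F)
    rw [Eq'_D, Eq'_D, Eq'_D]; try rfl

lemma Gq_neg (x : R F) : Gq F (-x) = -Gq F x := map_neg (Gq F) x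

lemma Gq_sq (x : R F) : Gq F (Gq F x) = x := by
  refine ext_hom F (fun y => Gq F (Gq F y)) id ?_ ?_ ?_ ?_ ?_ ?_ ?_ ?_ ?_ ?_ x
  · intro x y
    show Gq F (Gq F (x + y)) = _
    rw [map_add, map_add]; try rfl
  · intro x y; rfl
  · intro x y
    show Gq F (Gq F (x * y)) = _
    rw [map_mul, map_mul]; try rfl
  · intro x y; rfl
  · intro r
    show Gq F (Gq F (algebraMap F (R F) r)) = algebraMap F (R F) r
    rw [AlgHom.commutes, AlgHom.commutes]
  · intro r; rfl
  · show Gq F (Gq F (A F)) = id (A F)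
    rw [Gq_A, Gq_A]; try rfl
  · show Gq F (Gq F (B F)) = id (B F)
    rw [Gq_B, Gq_C]; try rfl
  · show Gq F (Gq F (C F)) = id (C F)
    rw [Gq_C, Gq_B]; try rfl
  · show Gq F (Gq F (D F)) = id (D F)
    rw [Gq_D, Gq_neg, Gq_D]
    exact neg_neg (D F)

end more

end Racah

open Racah in
/-- there is a unique antiautomorphism 𝒯 of ℜ with A ↦ B, B ↦ C, C ↦ A;
moreover 𝒯 sends D ↦ −D, α ↦ β, β ↦ γ, γ ↦ α, δ ↦ δ, 𝒯⁶ = id, and (𝒮 ∘ 𝒯)² = id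
where 𝒮 is the unique antiautomorphism with A ↦ B, B ↦ A, C ↦ C, D ↦ D. -/
theorem stmt4 (F : Type) [Field F] (h2 : (2 : F) ≠ 0) :
    (∃! T : Racah.R F ≃ₗ[F] Racah.R F, IsAntiAut F T ∧
      T (Racah.A F) = Racah.B F ∧ T (Racah.B F) = Racah.C F ∧ T (Racah.C F) = Racah.A F) ∧
    (∀ T : Racah.R F ≃ₗ[F] Racah.R F, (IsAntiAut F T ∧
      T (Racah.A F) = Racah.B F ∧ T (Racah.B F) = Racah.C F ∧ T (Racah.C F) = Racah.A F) →
      T (Racah.D F) = -Racah.D F ∧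
      T (al F) = be F ∧ T (be F) = ga F ∧ T (ga F) = al F ∧ T (de F) = de F ∧
      (∀ x : Racah.R F, T (T (T (T (T (T x))))) = x) ∧
      (∀ S : Racah.R F ≃ₗ[F] Racah.R F, (IsAntiAut F S ∧
        S (Racah.A F) = Racah.B F ∧ S (Racah.B F) = Racah.A F ∧
        S (Racah.C F) = Racah.C F ∧ S (Racah.D F) = Racah.D F) →
        ∀ x : Racah.R F, S (T (S (T x))) = x)) := by
  constructor
  · refine ⟨T0 F, ⟨T0_antiAut F, ?_, ?_, ?_⟩, ?_⟩
    · exact Tfun_A F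
    · exact Tfun_B F
    · exact Tfun_C F
    · rintro T' ⟨hI, hA, hB, hC⟩
      exact LinearEquiv.ext (antiaut_eq_Tfun F h2 T' hI hA hB hC)
  · rintro T ⟨hI, hA, hB, hC⟩
    have hD := antiaut_D F h2 T hI hA hB
    have hx := antiaut_eq_Tfun F h2 T hI hA hB hC
    refine ⟨hD, ?_, ?_, ?_, ?_, ?_, ?_⟩
    · rw [hx]; exact Tfun_al F
    · rw [hx]; exact Tfun_be F
    · rw [hx]; exact Tfun_ga F
    · rw [hx]; exact Tfun_de F
    · intro x
      simp only [hx, TfunTfun]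
      exact Eq'_cube F x
    · rintro S ⟨hSI, hSA, hSB, hSC, hSD⟩
      have hST : ∀ x, S (T x) = Gq F x := by
        refine ext_hom F (fun y => S (T y)) (Gq F) ?_ ?_ ?_ ?_ ?_ ?_ ?_ ?_ ?_ ?_
        · intro x y
          show S (T (x + y)) = S (T x) + S (T y)
          rw [map_add, map_add]
        · exact fun x y => map_add (Gq F) x y
        · intro x y
          show S (T (x * y)) = S (T x) * S (T y)
          rw [hI.2, hSI.2]
        · exact fun x y => map_mul (Gq F) x y
        · intro r
          show S (T (algebraMap F (R F) r)) = algebraMap F (R F) r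
          rw [antiaut_alg F T hI, antiaut_alg F S hSI]
        · exact fun r => (Gq F).commutes r
        · show S (T (A F)) = Gq F (A F)
          rw [hA, hSB, Gq_A]
        · show S (T (B F)) = Gq F (B F)
          rw [hB, hSC, Gq_B]
        · show S (T (C F)) = Gq F (C F)
          rw [hC, hSA, Gq_C]
        · show S (T (D F)) = Gq F (D F)
          have e := map_neg S (D F)
          rw [hD, Gq_D, e, hSD]
      intro x
      simp only [hST]
      exact Gq_sq F x
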